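/- arXiv:1111.3181 — 3 statements merged into one kernel-verified Lean document; each statement's English description precedes it below -/
import Mathlib

section
/- Let ι be a finite set and v : ι → ℝ. Then the following identity holds in ℚ: 1_{∀k∈ι, v(k) > 0} = Σ_{I ⊆ ι} Σ_{ε : I → {−1,1}} 2^{−(|ι| + |I|)} · (∏_{j∈I} ε(j)) · (∏_{j∈I} #{y ∈ ℝ : y² = ε(j)·v(j)}) · (∏_{k∈ι∖I} 1_{v(k) ≠ 0}), where the outer sum ranges over all subsets I of ι and the inner sum over all sign functions ε on I. -/
/-!
For a single real number `x`, the identity reads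
`1_{x > 0} = ¼ (#{y² = x} − #{y² = −x}) + ½ · 1_{x ≠ 0}`, checked on the three signs of `x`.
Taking the product of these identities over `k ∈ ι` and expanding it, a subset `I` records the
factors where the first summand was chosen and `ε` the sign picked in each of them; the
weights `¼` on `I` and `½` off `I` multiply to `2^{−(|ι|+|I|)}`.
-/

open Finset

theorem Real.natCard_setOf_sq_eq (c : ℝ) :
    Nat.card {y : ℝ | y ^ 2 = c} = if 0 < c then 2 else if c = 0 then 1 else 0 := by
  rcases lt_trichotomy 0 c with hc | rfl | hc
  · have hroots : {y : ℝ | y ^ 2 = c} = {√c, -√c} := by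
      ext y
      rw [Set.mem_ofPred_eq, ← Real.sq_sqrt hc.le, sq_eq_sq_iff_eq_or_eq_neg, Real.sq_sqrt hc.le]
      rfl
    have hne : √c ≠ -√c := by linarith [Real.sqrt_pos.2 hc]
    rw [if_pos hc, hroots, Nat.card_coe_set_eq, Set.ncard_pair hne]
  · simp
  · have hroots : {y : ℝ | y ^ 2 = c} = ∅ :=
      Set.eq_empty_of_forall_notMem fun y hy => by nlinarith [sq_nonneg y, hy.symm]
    simp [hroots, hc.not_gt, hc.ne]

theorem ite_pos_eq_sum_card_sq (x : ℝ) :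
    (if 0 < x then (1 : ℚ) else 0) =
      ∑ e ∈ ({-1, 1} : Finset ℤ), 4⁻¹ * (e : ℚ) * Nat.card {y : ℝ | y ^ 2 = (e : ℝ) * x} +
        2⁻¹ * if x ≠ 0 then 1 else 0 := by
  rw [sum_pair (by norm_num)]
  push_cast
  simp only [neg_one_mul, one_mul, Real.natCard_setOf_sq_eq]
  rcases lt_trichotomy 0 x with hx | rfl | hx
  · norm_num [hx, hx.ne', hx.not_gt]
  · norm_num
  · norm_num [hx, hx.ne, hx.not_gt]

theorem Fintype.prod_sum_add {ι κ R : Type*} [Fintype ι] [DecidableEq ι] [Fintype κ]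
    [CommSemiring R] (f : ι → κ → R) (g : ι → R) :
    ∏ i, (∑ k, f i k + g i) =
      ∑ I : Finset ι, ∑ ε : I → κ, (∏ j : I, f j (ε j)) * ∏ i ∈ Iᶜ, g i := by
  rw [Fintype.prod_add]
  refine Finset.sum_congr rfl fun I _ => ?_
  rw [← sum_mul, ← Fintype.prod_sum, prod_coe_sort I fun j => ∑ k, f j k]

theorem two_zpow_neg_add_eq {K : Type*} [DivisionRing K] {n i : ℕ} (hi : i ≤ n) :
    (2 : K) ^ (-((n : ℤ) + i)) = 4⁻¹ ^ i * 2⁻¹ ^ (n - i) := by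
  obtain ⟨m, rfl⟩ := Nat.exists_eq_add_of_le hi
  rw [Nat.add_sub_cancel_left, show -((↑(i + m) : ℤ) + i) = -↑(2 * i + m) by push_cast; ring,
    zpow_neg, zpow_natCast, ← inv_pow, pow_add, pow_mul, inv_pow, inv_pow, inv_pow]
  norm_num

/-- The fibrewise content of the inclusion-exclusion formula expressing the measure of
`{v k > 0, k ∈ ι}` in terms of the double covers `{y² = ε_j v_j}`:
`1_{∀k, v k > 0} = Σ_{I ⊆ ι} Σ_{ε : I → {−1,1}} 2^{−(|ι|+|I|)} (∏_{j∈I} ε_j)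
(∏_{j∈I} #{y : y² = ε_j v_j}) (∏_{k∉I} 1_{v k ≠ 0})`. -/
theorem stmt2 (ι : Type) [Fintype ι] [DecidableEq ι] (v : ι → ℝ) :
    (if ∀ k, 0 < v k then (1 : ℚ) else 0) =
      ∑ I : Finset ι, ∑ ε : I → ({-1, 1} : Finset ℤ),
        (2 : ℚ) ^ (-((Fintype.card ι : ℤ) + (I.card : ℤ))) *
          (∏ j : I, ((ε j : ℤ) : ℚ)) *
          (∏ j : I, (Nat.card {y : ℝ | y ^ 2 = ((ε j : ℤ) : ℝ) * v j} : ℚ)) *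
          (∏ k ∈ Iᶜ, if v k ≠ 0 then (1 : ℚ) else 0) := by
  calc (if ∀ k, 0 < v k then (1 : ℚ) else 0)
      = ∏ k, (∑ e : ({-1, 1} : Finset ℤ),
          4⁻¹ * ((e : ℤ) : ℚ) * Nat.card {y : ℝ | y ^ 2 = ((e : ℤ) : ℝ) * v k} +
            2⁻¹ * if v k ≠ 0 then (1 : ℚ) else 0) := by
        rw [← Fintype.prod_boole]
        refine prod_congr rfl fun k _ => ?_
        rw [sum_coe_sort _ fun e : ℤ => 4⁻¹ * (e : ℚ) * Nat.card {y : ℝ | y ^ 2 = e * v k}]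
        exact ite_pos_eq_sum_card_sq (v k)
    _ = _ := by
        rw [Fintype.prod_sum_add]
        refine sum_congr rfl fun I _ => sum_congr rfl fun ε _ => ?_
        rw [prod_mul_distrib, prod_mul_distrib, prod_const, prod_mul_distrib, prod_const,
          card_univ, Fintype.card_coe, card_compl, two_zpow_neg_add_eq (card_le_univ I)]
        ring
end

section
/- Let I be a nonempty finite set, let N : I → ℕ take positive values, let m = gcd_{i∈I} N_i, and let n : I → ℤ satisfy Σ_{i∈I} n_i N_i = m. Let Z be any set, u : Z → ℝ∖{0} a function, and c a nonzero real number. Then the map (z, x', t) ↦ (z, (t^{n_i}·x'_i)_{i∈I}) is a bijection from W' = {(z, x', t) ∈ Z × (ℝ∖{0})^I × (ℝ∖{0}) : u(z)·t^m = c and ∏_{i∈I} (x'_i)^{N_i/m} = 1} onto W = {(z, x) ∈ Z × (ℝ∖{0})^I : u(z)·∏_{i∈I} x_i^{N_i} = c}, with inverse (z, x) ↦ (z, ((∏_{ℓ∈I} x_ℓ^{N_ℓ/m})^{−n_i}·x_i)_{i∈I}, ∏_{ℓ∈I} x_ℓ^{N_ℓ/m}). -/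
/-!
Write `e_i = N_i / m` and `s(x) = ∏ x_ℓ ^ e_ℓ`. Dividing `Σ n_i N_i = m` by `m` gives
`Σ n_i e_i = 1`, so `s(t^{n} · x) = t · s(x)` for every `t ≠ 0`, while `m ∣ N_i` gives
`∏ x_i ^ N_i = s(x) ^ m`. Hence the map sends a point with `s(x') = 1` to one with
`s = t` and `∏ x_i ^ N_i = t ^ m`; conversely `s(s(x)^{-n} · x) = s(x)⁻¹ · s(x) = 1`.
-/

open Finset

section Arithmetic

variable {ι : Type*}

theorem Finset.sum_mul_div_eq_one_of_sum_mul_eq (s : Finset ι) {N : ι → ℕ} {m : ℕ}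
    {n : ι → ℤ} (hm : m ≠ 0) (hdvd : ∀ i ∈ s, m ∣ N i) (h : ∑ i ∈ s, n i * N i = m) :
    ∑ i ∈ s, n i * ((N i / m : ℕ) : ℤ) = 1 := by
  refine mul_right_cancel₀ (Int.natCast_ne_zero.2 hm) ?_
  rw [sum_mul, one_mul]
  refine (sum_congr rfl fun i hi => ?_).trans h
  rw [mul_assoc, ← Nat.cast_mul, Nat.div_mul_cancel (hdvd i hi)]

variable {G₀ : Type*} [CommGroupWithZero G₀]

theorem Finset.prod_zpow_eq_zpow_sum₀ {t : G₀} (ht : t ≠ 0) (s : Finset ι) (a : ι → ℤ) :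
    ∏ i ∈ s, t ^ a i = t ^ ∑ i ∈ s, a i := by
  induction s using Finset.cons_induction with
  | empty => simp
  | cons j s hj ih => rw [prod_cons, sum_cons, ih, zpow_add₀ ht]

theorem Finset.prod_zpow_mul_pow {t : G₀} (ht : t ≠ 0) (s : Finset ι) (a : ι → ℤ)
    (y : ι → G₀) (k : ι → ℕ) :
    ∏ i ∈ s, (t ^ a i * y i) ^ k i = t ^ (∑ i ∈ s, a i * k i) * ∏ i ∈ s, y i ^ k i := by
  rw [← prod_zpow_eq_zpow_sum₀ ht, ← prod_mul_distrib]
  refine prod_congr rfl fun i _ => ?_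
  rw [mul_pow, ← zpow_natCast, ← zpow_mul]

theorem Finset.prod_pow_eq_prod_pow_div_pow (s : Finset ι) (y : ι → G₀) {N : ι → ℕ} {m : ℕ}
    (hdvd : ∀ i ∈ s, m ∣ N i) : ∏ i ∈ s, y i ^ N i = (∏ i ∈ s, y i ^ (N i / m)) ^ m := by
  rw [← prod_pow]
  exact prod_congr rfl fun i hi => by rw [← pow_mul, Nat.div_mul_cancel (hdvd i hi)]

end Arithmetic

namespace GcdCover

variable {ι Z G₀ : Type*} [Fintype ι] [CommGroupWithZero G₀]
  (N : ι → ℕ) (m : ℕ) (n : ι → ℤ) (u : Z → G₀) (c : G₀)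

def weightedProd (x : ι → G₀) : G₀ := ∏ l, x l ^ (N l / m)

def coverSet : Set (Z × (ι → G₀) × G₀) :=
  {p | u p.1 * p.2.2 ^ m = c ∧ (∀ i, p.2.1 i ≠ 0) ∧ p.2.2 ≠ 0 ∧ weightedProd N m p.2.1 = 1}

def levelSet : Set (Z × (ι → G₀)) :=
  {p | (∀ i, p.2 i ≠ 0) ∧ u p.1 * ∏ i, p.2 i ^ N i = c}

def coverToLevel (p : Z × (ι → G₀) × G₀) : Z × (ι → G₀) :=
  (p.1, fun i => p.2.2 ^ n i * p.2.1 i)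

def levelToCover (q : Z × (ι → G₀)) : Z × (ι → G₀) × G₀ :=
  (q.1, fun i => weightedProd N m q.2 ^ (-n i) * q.2 i, weightedProd N m q.2)

variable {N m n}

theorem weightedProd_ne_zero {x : ι → G₀} (hx : ∀ i, x i ≠ 0) : weightedProd N m x ≠ 0 :=
  prod_ne_zero_iff.2 fun i _ => pow_ne_zero _ (hx i)

theorem prod_pow_eq_weightedProd_pow (hdvd : ∀ i, m ∣ N i) (x : ι → G₀) :
    ∏ i, x i ^ N i = weightedProd N m x ^ m :=
  prod_pow_eq_prod_pow_div_pow _ x fun i _ => hdvd i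

theorem weightedProd_zpow_mul {t : G₀} (ht : t ≠ 0) (a : ι → ℤ) (x : ι → G₀) :
    weightedProd N m (fun i => t ^ a i * x i) =
      t ^ (∑ i, a i * ((N i / m : ℕ) : ℤ)) * weightedProd N m x :=
  prod_zpow_mul_pow ht _ a x _

variable (hdvd : ∀ i, m ∣ N i) (hsum : ∑ i, n i * ((N i / m : ℕ) : ℤ) = 1)
include hsum

theorem weightedProd_coverToLevel {t : G₀} (ht : t ≠ 0) (x : ι → G₀) :
    weightedProd N m (fun i => t ^ n i * x i) = t * weightedProd N m x := by
  rw [weightedProd_zpow_mul ht, hsum, zpow_one]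

theorem weightedProd_levelToCover {x : ι → G₀} (hx : ∀ i, x i ≠ 0) :
    weightedProd N m (fun i => weightedProd N m x ^ (-n i) * x i) = 1 := by
  rw [weightedProd_zpow_mul (weightedProd_ne_zero hx)]
  simp only [neg_mul, sum_neg_distrib, hsum, zpow_neg_one]
  exact inv_mul_cancel₀ (weightedProd_ne_zero hx)

theorem invOn_levelToCover_coverToLevel :
    Set.InvOn (levelToCover (Z := Z) N m n) (coverToLevel n) (coverSet N m u c)
      (levelSet N u c) := by
  constructor
  · rintro ⟨z, x, t⟩ ⟨-, -, ht, hw⟩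
    simp only [coverToLevel, levelToCover, weightedProd_coverToLevel hsum ht, hw, mul_one,
      ← mul_assoc, ← zpow_add₀ ht, neg_add_cancel, zpow_zero, one_mul]
  · rintro ⟨z, x⟩ ⟨hx, -⟩
    simp only [coverToLevel, levelToCover, ← mul_assoc,
      ← zpow_add₀ (weightedProd_ne_zero hx), add_neg_cancel, zpow_zero, one_mul]

include hdvd

theorem mapsTo_coverToLevel :
    Set.MapsTo (coverToLevel (Z := Z) n) (coverSet N m u c) (levelSet N u c) := by
  rintro ⟨z, x, t⟩ ⟨hc, hx, ht, hw⟩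
  refine ⟨fun i => mul_ne_zero (zpow_ne_zero _ ht) (hx i), ?_⟩
  simpa only [coverToLevel, prod_pow_eq_weightedProd_pow hdvd,
    weightedProd_coverToLevel hsum ht, hw, mul_one] using hc

theorem mapsTo_levelToCover :
    Set.MapsTo (levelToCover (Z := Z) N m n) (levelSet N u c) (coverSet N m u c) := by
  rintro ⟨z, x⟩ ⟨hx, hc⟩
  refine ⟨?_, fun i => mul_ne_zero (zpow_ne_zero _ (weightedProd_ne_zero hx)) (hx i),
    weightedProd_ne_zero hx, weightedProd_levelToCover hsum hx⟩
  show u z * weightedProd N m x ^ m = c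
  rwa [← prod_pow_eq_weightedProd_pow hdvd]

end GcdCover

open GcdCover in
theorem stmt7_general (ι : Type) [Fintype ι] [Nonempty ι]
    (N : ι → ℕ) (hN : ∀ i, 0 < N i)
    (m : ℕ) (hm : m = Finset.univ.gcd N)
    (nn : ι → ℤ) (hnn : ∑ i, nn i * (N i : ℤ) = (m : ℤ))
    (Z : Type) (u : Z → ℝ) (c : ℝ) :
    Set.BijOn
      (fun p : Z × (ι → ℝ) × ℝ => (p.1, fun i => p.2.2 ^ (nn i) * p.2.1 i))
      {p : Z × (ι → ℝ) × ℝ | u p.1 * p.2.2 ^ m = c ∧ (∀ i, p.2.1 i ≠ 0) ∧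
        p.2.2 ≠ 0 ∧ ∏ i, (p.2.1 i) ^ (N i / m) = 1}
      {p : Z × (ι → ℝ) | (∀ i, p.2 i ≠ 0) ∧ u p.1 * ∏ i, (p.2 i) ^ (N i) = c} ∧
    Set.InvOn
      (fun q : Z × (ι → ℝ) =>
        (q.1, fun i => (∏ l, (q.2 l) ^ (N l / m)) ^ (-(nn i)) * q.2 i,
          ∏ l, (q.2 l) ^ (N l / m)))
      (fun p : Z × (ι → ℝ) × ℝ => (p.1, fun i => p.2.2 ^ (nn i) * p.2.1 i))
      {p : Z × (ι → ℝ) × ℝ | u p.1 * p.2.2 ^ m = c ∧ (∀ i, p.2.1 i ≠ 0) ∧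
        p.2.2 ≠ 0 ∧ ∏ i, (p.2.1 i) ^ (N i / m) = 1}
      {p : Z × (ι → ℝ) | (∀ i, p.2 i ≠ 0) ∧ u p.1 * ∏ i, (p.2 i) ^ (N i) = c} := by
  have hdvd : ∀ i, m ∣ N i := fun i => hm ▸ Finset.gcd_dvd (Finset.mem_univ i)
  have hm0 : m ≠ 0 := by
    obtain ⟨i⟩ := ‹Nonempty ι›
    rw [hm, Ne, Finset.gcd_eq_zero_iff]
    exact fun h => (hN i).ne' (h i (Finset.mem_univ i))
  have hsum := Finset.sum_mul_div_eq_one_of_sum_mul_eq _ hm0 (fun i _ => hdvd i) hnn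
  have hinv := invOn_levelToCover_coverToLevel (Z := Z) u c hsum
  exact ⟨hinv.bijOn (mapsTo_coverToLevel u c hdvd hsum) (mapsTo_levelToCover u c hdvd hsum),
    hinv⟩

/-- The gcd-normalization change of variables: with `m = gcd_{i∈I} N_i` and
`Σ n_i N_i = m`, the map `(z, x', t) ↦ (z, (t^{n_i} x'_i)_i)` is a bijection from
`W' = {u(z) t^m = c, ∏ (x'_i)^{N_i/m} = 1}` onto `W = {u(z) ∏ x_i^{N_i} = c}`, with the
indicated inverse `(z, x) ↦ (z, ((∏ x_ℓ^{N_ℓ/m})^{-n_i} x_i)_i, ∏ x_ℓ^{N_ℓ/m})`. -/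
theorem stmt7 (ι : Type) [Fintype ι] [Nonempty ι]
    (N : ι → ℕ) (hN : ∀ i, 0 < N i)
    (m : ℕ) (hm : m = Finset.univ.gcd N)
    (nn : ι → ℤ) (hnn : ∑ i, nn i * (N i : ℤ) = (m : ℤ))
    (Z : Type) (u : Z → ℝ) (hu : ∀ z, u z ≠ 0) (c : ℝ) (hc : c ≠ 0) :
    Set.BijOn
      (fun p : Z × (ι → ℝ) × ℝ => (p.1, fun i => p.2.2 ^ (nn i) * p.2.1 i))
      {p : Z × (ι → ℝ) × ℝ | u p.1 * p.2.2 ^ m = c ∧ (∀ i, p.2.1 i ≠ 0) ∧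
        p.2.2 ≠ 0 ∧ ∏ i, (p.2.1 i) ^ (N i / m) = 1}
      {p : Z × (ι → ℝ) | (∀ i, p.2 i ≠ 0) ∧ u p.1 * ∏ i, (p.2 i) ^ (N i) = c} ∧
    Set.InvOn
      (fun q : Z × (ι → ℝ) =>
        (q.1, fun i => (∏ l, (q.2 l) ^ (N l / m)) ^ (-(nn i)) * q.2 i,
          ∏ l, (q.2 l) ^ (N l / m)))
      (fun p : Z × (ι → ℝ) × ℝ => (p.1, fun i => p.2.2 ^ (nn i) * p.2.1 i))
      {p : Z × (ι → ℝ) × ℝ | u p.1 * p.2.2 ^ m = c ∧ (∀ i, p.2.1 i ≠ 0) ∧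
        p.2.2 ≠ 0 ∧ ∏ i, (p.2.1 i) ^ (N i / m) = 1}
      {p : Z × (ι → ℝ) | (∀ i, p.2 i ≠ 0) ∧ u p.1 * ∏ i, (p.2 i) ^ (N i) = c} :=
  stmt7_general ι N hN m hm nn hnn Z u c
end

section
/- Let R and S be polynomials in n real variables. Let f = (f₁, …, fₙ) be an n-tuple of polynomials and g a polynomial, all in n+1 variables and all with real coefficients, such that f(x, −y) = f(x, y) and g(x, −y) = −g(x, y) for all (x, y) ∈ ℂⁿ × ℂ, and suppose the map φ = (f, g) restricts to a bijection from V⁺_ℂ = {(x,y) ∈ ℂⁿ × ℂ : y² = R(x)} onto W⁺_ℂ = {(x,y) ∈ ℂⁿ × ℂ : y² = S(x)}. Then the map (x, y) ↦ (f(x, −i·y), i·g(x, −i·y)) restricts to a bijection from the set of real points V⁻ = {(x,y) ∈ ℝⁿ × ℝ : y² = −R(x)} onto the set of real points W⁻ = {(x,y) ∈ ℝⁿ × ℝ : y² = −S(x)}. -/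
open MvPolynomial Complex Function Set
open scoped ComplexConjugate

/-!
The rotation `(x, y) ↦ (x, -i y)` identifies the real points of `{y² = -R(x)}` with the points
of `V⁺_ℂ = {y² = R(x)}` fixed by the antiholomorphic involution `(x, y) ↦ (x̄, -ȳ)`, and the map
of the theorem is `φ` conjugated by this rotation. Since `f` and `g` have real coefficients, `f`
is even and `g` odd in `y`, `φ` commutes with the involution, so the bijection `V⁺_ℂ → W⁺_ℂ`
restricts to a bijection between the fixed-point sets.
-/

theorem Set.BijOn.inter_fixedPoints {α β : Type*} {φ : α → β} {s : Set α} {t : Set β}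
    {ι : α → α} {κ : β → β} (h : BijOn φ s t) (hι : MapsTo ι s s)
    (hcomm : ∀ p ∈ s, φ (ι p) = κ (φ p)) :
    BijOn φ (s ∩ fixedPoints ι) (t ∩ fixedPoints κ) := by
  refine ⟨fun p ⟨hp, hfix⟩ => ⟨h.mapsTo hp, ?_⟩, h.injOn.mono inter_subset_left, ?_⟩
  · change κ (φ p) = φ p
    rw [← hcomm p hp, hfix.eq]
  · rintro q ⟨hq, hfix⟩
    obtain ⟨p, hp, rfl⟩ := h.surjOn hq
    refine ⟨p, ⟨hp, h.injOn (hι hp) hp ?_⟩, rfl⟩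
    rw [hcomm p hp, hfix.eq]

namespace MvPolynomial

theorem eval_conj {σ : Type*} {p : MvPolynomial σ ℂ} (hp : ∀ m, (p.coeff m).im = 0)
    (z : σ → ℂ) : eval (conj ∘ z) p = conj (eval z p) := by
  have hmap : map (starRingEnd ℂ) p = p := by
    ext m
    exact conj_eq_iff_im.2 (hp m)
  conv_lhs => rw [← hmap, eval_map]
  exact (eval₂_comp_left (starRingEnd ℂ) (RingHom.id ℂ) z p).symm

theorem aeval_conj {σ : Type*} (R : MvPolynomial σ ℝ) (x : σ → ℂ) :
    aeval (conj ∘ x) R = conj (aeval x R) :=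
  (DFunLike.congr_fun (comp_aeval (R := ℝ) (conjAe.toAlgHom) (f := x)) R).symm

end MvPolynomial

section DoubleCover

variable {σ : Type*}

def posCover (R : MvPolynomial σ ℝ) : Set ((σ → ℂ) × ℂ) :=
  {p | p.2 ^ 2 = aeval p.1 R}

def realNegCover (R : MvPolynomial σ ℝ) : Set ((σ → ℂ) × ℂ) :=
  {p | (∀ i, (p.1 i).im = 0) ∧ p.2.im = 0 ∧ p.2 ^ 2 = -(aeval p.1 R)}

noncomputable def coverMap (f : σ → MvPolynomial (Option σ) ℂ)
    (g : MvPolynomial (Option σ) ℂ) (p : (σ → ℂ) × ℂ) : (σ → ℂ) × ℂ :=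
  ((fun i => eval (fun v => v.elim p.2 p.1) (f i)), eval (fun v => v.elim p.2 p.1) g)

def twistedConj (p : (σ → ℂ) × ℂ) : (σ → ℂ) × ℂ :=
  (conj ∘ p.1, -conj p.2)

def rotateSnd : ((σ → ℂ) × ℂ) ≃ ((σ → ℂ) × ℂ) where
  toFun p := (p.1, -I * p.2)
  invFun p := (p.1, I * p.2)
  left_inv p := by ext <;> simp [← mul_assoc]
  right_inv p := by ext <;> simp [← mul_assoc]

theorem mapsTo_twistedConj_posCover (R : MvPolynomial σ ℝ) :
    MapsTo twistedConj (posCover R) (posCover R) := by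
  intro p hp
  simp only [posCover, twistedConj, mem_ofPred_eq, neg_sq, aeval_conj] at hp ⊢
  rw [← map_pow, hp]

theorem coverMap_twistedConj {f : σ → MvPolynomial (Option σ) ℂ}
    {g : MvPolynomial (Option σ) ℂ}
    (hfreal : ∀ i m, ((f i).coeff m).im = 0)
    (hgreal : ∀ m, (g.coeff m).im = 0)
    (hfsym : ∀ (i : σ) (x : σ → ℂ) (y : ℂ),
      eval (fun v => v.elim (-y) x) (f i) = eval (fun v => v.elim y x) (f i))
    (hgantisym : ∀ (x : σ → ℂ) (y : ℂ),
      eval (fun v => v.elim (-y) x) g = - eval (fun v => v.elim y x) g)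
    (p : (σ → ℂ) × ℂ) : coverMap f g (twistedConj p) = twistedConj (coverMap f g p) := by
  obtain ⟨x, y⟩ := p
  have hpoint :
      (fun v : Option σ => v.elim (conj y) (conj ∘ x)) = conj ∘ fun v => v.elim y x := by
    funext v; cases v <;> rfl
  ext i
  · simp only [coverMap, twistedConj, hfsym, hpoint, eval_conj (hfreal i), comp_apply]
  · simp only [coverMap, twistedConj, hgantisym, hpoint, eval_conj hgreal]

theorem rotateSnd_image_realNegCover (R : MvPolynomial σ ℝ) :
    rotateSnd '' realNegCover R = posCover R ∩ fixedPoints twistedConj := by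
  ext ⟨x, y⟩
  rw [rotateSnd.image_eq_preimage_symm]
  have hx : (∀ i, (x i).im = 0) ↔ conj ∘ x = x := by
    simp only [funext_iff, comp_apply, conj_eq_iff_im]
  have hy : (I * y).im = 0 ↔ -conj y = y := by
    rw [← conj_eq_iff_im, map_mul, conj_I, neg_mul, ← mul_neg, mul_right_inj' I_ne_zero]
  have hsq : (I * y) ^ 2 = -aeval x R ↔ y ^ 2 = aeval x R := by
    rw [mul_pow, I_sq, neg_one_mul, neg_inj]
  simp only [mem_preimage, mem_inter_iff, mem_fixedPoints, IsFixedPt, realNegCover, posCover,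
    twistedConj, mem_ofPred_eq, Prod.mk.injEq, rotateSnd, Equiv.coe_fn_symm_mk, hx, hy, hsq]
  tauto

end DoubleCover

/-- If `φ = (f, g)` (with `f(x,−y) = f(x,y)`, `g(x,−y) = −g(x,y)`, all real coefficients)
restricts to a bijection from `V⁺_ℂ = {y² = R(x)}` onto `W⁺_ℂ = {y² = S(x)}`, then
`(x,y) ↦ (f(x,−iy), i·g(x,−iy))` restricts to a bijection from the set of real points of
`{y² = −R(x)}` onto the set of real points of `{y² = −S(x)}`. Real points of `ℂⁿ × ℂ` are
the points all of whose coordinates have vanishing imaginary part; variables of the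
polynomials `f i` and `g` are indexed by `Option (Fin n)`, with `none` corresponding
to `y`. -/
theorem stmt12 (n : ℕ) (R S : MvPolynomial (Fin n) ℝ)
    (f : Fin n → MvPolynomial (Option (Fin n)) ℂ)
    (g : MvPolynomial (Option (Fin n)) ℂ)
    (hfreal : ∀ i m, ((f i).coeff m).im = 0)
    (hgreal : ∀ m, (g.coeff m).im = 0)
    (hfsym : ∀ (i : Fin n) (x : Fin n → ℂ) (y : ℂ),
      eval (fun v => v.elim (-y) x) (f i) = eval (fun v => v.elim y x) (f i))
    (hgantisym : ∀ (x : Fin n → ℂ) (y : ℂ),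
      eval (fun v => v.elim (-y) x) g = - eval (fun v => v.elim y x) g)
    (hbij : Set.BijOn
      (fun p : (Fin n → ℂ) × ℂ =>
        ((fun i => eval (fun v => v.elim p.2 p.1) (f i)),
          eval (fun v => v.elim p.2 p.1) g))
      {p : (Fin n → ℂ) × ℂ | p.2 ^ 2 = aeval p.1 R}
      {p : (Fin n → ℂ) × ℂ | p.2 ^ 2 = aeval p.1 S}) :
    Set.BijOn
      (fun p : (Fin n → ℂ) × ℂ =>
        ((fun i => eval (fun v => v.elim (-I * p.2) p.1) (f i)),
          I * eval (fun v => v.elim (-I * p.2) p.1) g))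
      {p : (Fin n → ℂ) × ℂ | (∀ i, (p.1 i).im = 0) ∧ p.2.im = 0 ∧
        p.2 ^ 2 = -(aeval p.1 R)}
      {p : (Fin n → ℂ) × ℂ | (∀ i, (p.1 i).im = 0) ∧ p.2.im = 0 ∧
        p.2 ^ 2 = -(aeval p.1 S)} := by
  have h := (show BijOn (coverMap f g) (posCover R) (posCover S) from hbij).inter_fixedPoints
    (mapsTo_twistedConj_posCover R) fun p _ =>
      coverMap_twistedConj hfreal hgreal hfsym hgantisym p
  rw [← rotateSnd_image_realNegCover, ← rotateSnd_image_realNegCover] at h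
  exact rotateSnd.bijOn_symm_image.comp (h.comp rotateSnd.bijOn_image)
end
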